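/- arXiv:1211.2614 — 3 statements merged into one kernel-verified Lean document; each statement's English description precedes it below -/
import Mathlib

section
/- Let p and q be primes with p dividing q−1, let G be a finite non-abelian group of order pq with commutator subgroup G' = [G,G] (so |G'| = q), let S be a sequence over G all of whose terms lie in G' \ {1}, and let g₁, g₂ ∈ G \ G' be elements with g₁g₂ ∉ G'. Then |π(g₁·g₂·S)| ≥ min{q, 2|S| + 1}, where g₁·g₂·S denotes the sequence S with the terms g₁ and g₂ adjoined. -/
/-- The set of all products of the terms of the multiset `S` taken in some order. -/
def prodSet {G : Type*} [Group G] (S : Multiset G) : Set G :=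
  {g | ∃ l : List G, (l : Multiset G) = S ∧ l.prod = g}

/-- A sequence (multiset) over `G` is a product-one sequence if its terms can be
ordered so that their product is `1`. -/
def IsProductOne {G : Type*} [Group G] (S : Multiset G) : Prop :=
  (1 : G) ∈ prodSet S

/-- A minimal product-one sequence (atom): a nontrivial product-one sequence that cannot
be partitioned into two nontrivial product-one subsequences. -/
def IsMinimalProductOne {G : Type*} [Group G] (S : Multiset G) : Prop :=
  S ≠ 0 ∧ IsProductOne S ∧
    ¬ ∃ T₁ T₂ : Multiset G, T₁ ≠ 0 ∧ T₂ ≠ 0 ∧ S = T₁ + T₂ ∧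
      IsProductOne T₁ ∧ IsProductOne T₂

/-- The small Davenport constant: the maximal length of a sequence over `G` having
no nontrivial product-one subsequence. -/
noncomputable def smallDavenport (G : Type*) [Group G] : ℕ :=
  sSup {n | ∃ S : Multiset G, Multiset.card S = n ∧
    ∀ T : Multiset G, T ≤ S → T ≠ 0 → ¬ IsProductOne T}

/-- The large Davenport constant: the maximal length of a minimal product-one sequence. -/
noncomputable def largeDavenport (G : Type*) [Group G] : ℕ :=
  sSup {n | ∃ S : Multiset G, Multiset.card S = n ∧ IsMinimalProductOne S}

/-!
The commutator subgroup `G'` is the Sylow `q`-subgroup (normal, as its index `p` is the least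
prime factor of `pq`), so it is cyclic of order `q`. An element `g ∉ G'` commuting with some
`s ∈ G' \ {1}` would centralise `G' = ⟨s⟩` and `g`, hence all of `G`; then `G'` is central with
`G/G'` cyclic, and `G` is abelian. So conjugation by any element outside `G'` has no nontrivial
fixed point on `G'`.

Ordering `g₁ g₂ S` as `A g₁ B g₂ C` for a splitting `S = A + B + C` gives the product
`g₁ g₂ · φ(∏A) ψ(∏B) ∏C`, where `φ` and `ψ` are conjugation by `(g₁g₂)⁻¹` and `g₂⁻¹`.
Adjoining a term `s` to `S` multiplies the set of these elements by `{φ s, ψ s, s}`, which has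
three elements since `φ`, `ψ` and `ψ⁻¹ ∘ φ` (conjugation by `g₁⁻¹`) fix no `s ≠ 1`. By
Cauchy–Davenport in `G'` each new term adds at least two elements, until all of `G'` is reached.
-/

open scoped Pointwise

theorem Nat.Prime.minFac_mul_of_lt {p q : ℕ} (hp : p.Prime) (hq : q.Prime) (hpq : p < q) :
    (p * q).minFac = p := by
  have hprime :=
    Nat.minFac_prime (Nat.one_lt_mul_iff.mpr ⟨hp.pos, hq.pos, Or.inl hp.one_lt⟩).ne'
  have hle := Nat.minFac_le_of_dvd hp.two_le (dvd_mul_right p q)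
  rcases hprime.dvd_mul.mp (Nat.minFac_dvd _) with h | h
  · exact (Nat.prime_dvd_prime_iff_eq hprime hp).mp h
  · rw [(Nat.prime_dvd_prime_iff_eq hprime hq).mp h] at hle
    omega

section GroupTheory

variable {G : Type*} [Group G]

theorem Subgroup.eq_of_le_of_ne_bot_of_card_prime {K N : Subgroup G} (hKN : K ≤ N)
    (hK : K ≠ ⊥) (hN : (Nat.card N).Prime) : K = N := by
  have := Nat.finite_of_card_ne_zero hN.ne_zero
  refine Subgroup.eq_of_le_of_card_ge hKN ?_
  rcases hN.eq_one_or_self_of_dvd _ (Subgroup.card_dvd_of_le hKN) with h | h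
  · exact absurd (Subgroup.card_eq_one.mp h) hK
  · exact h.ge

theorem Subgroup.index_eq_of_card_eq_mul {p q : ℕ} (hq : 0 < q) (hG : Nat.card G = p * q)
    {H : Subgroup G} (hH : Nat.card H = q) : H.index = p := by
  have := H.card_mul_index
  rw [hH, hG, mul_comm p] at this
  exact Nat.eq_of_mul_eq_mul_left hq this

theorem card_commutator_of_card_eq_mul [Finite G] {p q : ℕ} (hp : p.Prime) (hq : q.Prime)
    (hpq : p < q) (hG : Nat.card G = p * q) (hna : ¬ IsMulCommutative G) :
    Nat.card (commutator G) = q := by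
  have : Fact q.Prime := ⟨hq⟩
  have : Fact p.Prime := ⟨hp⟩
  let P : Sylow q G := default
  have hP : Nat.card P = q := by
    rw [P.card_eq_multiplicity, hG, Nat.factorization_mul hp.ne_zero hq.ne_zero,
      Finsupp.add_apply, hp.factorization, hq.factorization, Finsupp.single_eq_same,
      Finsupp.single_eq_of_ne hpq.ne', zero_add, pow_one]
  have hPi : (P : Subgroup G).index = p := Subgroup.index_eq_of_card_eq_mul hq.pos hG hP
  have := Subgroup.normal_of_index_eq_minFac_card
    (hPi.trans (hG ▸ hp.minFac_mul_of_lt hq hpq).symm)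
  have := isCyclic_of_prime_card (α := G ⧸ (P : Subgroup G))
    ((Subgroup.index_eq_card _).symm.trans hPi)
  let := IsCyclic.commGroup (α := G ⧸ (P : Subgroup G))
  have hle : commutator G ≤ P := by
    simpa using Abelianization.commutator_subset_ker (QuotientGroup.mk' (P : Subgroup G))
  have hne : commutator G ≠ ⊥ := (commutator_eq_bot_iff G).not.mpr hna
  rw [Subgroup.eq_of_le_of_ne_bot_of_card_prime hle hne (by rwa [hP]), hP]

theorem MulAut.conjNormal_ne_self_of_card_prime_of_index_prime {N : Subgroup G} [N.Normal]
    (hN : (Nat.card N).Prime) (hNi : N.index.Prime) (hG : ¬ IsMulCommutative G)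
    {g : G} (hg : g ∉ N) {s : N} (hs : s ≠ 1) : MulAut.conjNormal g s ≠ s := by
  intro hgs
  replace hgs : Commute g s := by
    change g * s = s * g
    simpa [mul_inv_eq_iff_eq_mul] using congrArg Subtype.val hgs
  have hsN : Subgroup.zpowers (s : G) = N :=
    Subgroup.eq_of_le_of_ne_bot_of_card_prime (Subgroup.zpowers_le.mpr s.2) (by simpa using hs) hN
  have hNC : N ≤ Subgroup.centralizer N := by
    have : Fact (Nat.card N).Prime := ⟨hN⟩
    have := isCyclic_of_prime_card (α := N) rfl
    exact Subgroup.le_centralizer N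
  have hgC : g ∈ Subgroup.centralizer (N : Set G) := by
    rw [← hsN, Subgroup.mem_centralizer_iff]
    rintro _ ⟨k, rfl⟩
    exact (hgs.symm.zpow_left k).eq
  have hC : Subgroup.centralizer (N : Set G) = ⊤ := by
    rw [← Subgroup.index_eq_one]
    have hmul := Subgroup.relIndex_mul_index hNC
    rcases hNi.eq_one_or_self_of_dvd _ (Subgroup.relIndex_dvd_index_of_le hNC) with h | h
    · exact absurd (Subgroup.relIndex_eq_one.mp h hgC) hg
    · rwa [h, Nat.mul_eq_left hNi.ne_zero] at hmul
  have hNZ : N ≤ Subgroup.center G := Subgroup.centralizer_eq_top_iff_subset.mp hC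
  have : Fact N.index.Prime := ⟨hNi⟩
  have := isCyclic_of_prime_card (α := G ⧸ N) (Subgroup.index_eq_card N).symm
  exact hG ((QuotientGroup.mk' N).isMulCommutative_of_isCyclic_of_ker_le_center
    (by rwa [QuotientGroup.ker_mk']))

end GroupTheory

theorem min_le_ncard_mul_of_card_eq_prime {H : Type*} [Group H] [Finite H] {q : ℕ} [Fact q.Prime]
    (hH : Nat.card H = q) {s t : Set H} (hs : s.Nonempty) (ht : t.Nonempty) :
    min q (s.ncard + t.ncard - 1) ≤ (s * t).ncard := by
  classical
  have hmin : (q : ℕ∞) ≤ Monoid.minOrder H := Monoid.le_minOrder.mpr fun a ha _ => by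
    have := (Fact.out : q.Prime).eq_one_or_self_of_dvd _ (hH ▸ orderOf_dvd_natCard a)
    rw [this.resolve_left (orderOf_eq_one_iff.not.mpr ha)]
  lift s to Finset H using s.toFinite
  lift t to Finset H using t.toFinite
  rw [← Finset.coe_mul, Set.ncard_coe_finset, Set.ncard_coe_finset, Set.ncard_coe_finset]
  have h := (min_le_min_right _ hmin).trans
    (cauchy_davenport_minOrder_mul (Finset.coe_nonempty.mp hs) (Finset.coe_nonempty.mp ht))
  rw [min_le_iff] at h ⊢
  exact_mod_cast h

section TwistedProducts

variable {H : Type*} [Group H] (φ ψ : H →* H)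

def twistedProdSet (T : Multiset H) : Set H :=
  {x | ∃ a b c : List H, ((a ++ b ++ c : List H) : Multiset H) = T ∧
    φ a.prod * ψ b.prod * c.prod = x}

theorem twistedProdSet_nonempty (T : Multiset H) : (twistedProdSet φ ψ T).Nonempty :=
  ⟨_, T.toList, [], [], by simp, rfl⟩

theorem insert_mul_twistedProdSet_subset [IsMulCommutative H] (s : H) (T : Multiset H) :
    ({φ s, ψ s, s} : Set H) * twistedProdSet φ ψ T ⊆ twistedProdSet φ ψ (s ::ₘ T) := by
  rintro _ ⟨_, hd, _, ⟨a, b, c, rfl, rfl⟩, rfl⟩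
  simp only [Set.mem_insert_iff, Set.mem_singleton_iff] at hd
  rcases hd with h | h | h <;> rw [h]
  · exact ⟨s :: a, b, c, by simp, by simp only [List.prod_cons, map_mul]; ac_rfl⟩
  · exact ⟨a, s :: b, c, by simp, by simp only [List.prod_cons, map_mul]; ac_rfl⟩
  · exact ⟨a, b, s :: c, Multiset.coe_eq_coe.mpr List.perm_middle,
      by simp only [List.prod_cons]; ac_rfl⟩

theorem min_le_ncard_twistedProdSet [Finite H] {q : ℕ} [Fact q.Prime] (hH : Nat.card H = q)
    (hφ : ∀ s : H, s ≠ 1 → φ s ≠ s) (hψ : ∀ s : H, s ≠ 1 → ψ s ≠ s)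
    (hφψ : ∀ s : H, s ≠ 1 → φ s ≠ ψ s) (T : Multiset H) (hT : ∀ s ∈ T, s ≠ 1) :
    min q (2 * Multiset.card T + 1) ≤ (twistedProdSet φ ψ T).ncard := by
  have : IsCyclic H := isCyclic_of_prime_card hH
  induction T using Multiset.induction with
  | empty =>
    have := (twistedProdSet_nonempty φ ψ 0).ncard_pos
    rw [Multiset.card_zero]
    omega
  | cons s T ih =>
    have hs : s ≠ 1 := hT s (Multiset.mem_cons_self s T)
    have ih := ih fun x hx => hT x (Multiset.mem_cons_of_mem hx)
    have h3 : ({φ s, ψ s, s} : Set H).ncard = 3 := by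
      rw [Set.ncard_insert_of_notMem (by simp [hφ s hs, hφψ s hs]),
        Set.ncard_insert_of_notMem (by simp [hψ s hs]), Set.ncard_singleton]
    have hcd := min_le_ncard_mul_of_card_eq_prime hH (s := {φ s, ψ s, s})
      (Set.insert_nonempty _ _) (twistedProdSet_nonempty φ ψ T)
    have hsub := Set.ncard_le_ncard (insert_mul_twistedProdSet_subset φ ψ s T)
    rw [h3] at hcd
    rw [Multiset.card_cons]
    omega

end TwistedProducts

section Conjugation

variable {G : Type*} [Group G] {N : Subgroup G} [N.Normal]

theorem mul_mem_prodSet_of_mem_twistedProdSet (g₁ g₂ : G) {T : Multiset N} {x : N}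
    (hx : x ∈ twistedProdSet (MulAut.conjNormal (g₁ * g₂)⁻¹).toMonoidHom
      (MulAut.conjNormal g₂⁻¹).toMonoidHom T) :
    g₁ * g₂ * x ∈ prodSet (g₁ ::ₘ g₂ ::ₘ T.map (↑)) := by
  obtain ⟨a, b, c, rfl, rfl⟩ := hx
  refine ⟨a.map (↑) ++ g₁ :: (b.map (↑) ++ g₂ :: c.map (↑)), ?_, ?_⟩
  · simp only [Multiset.map_coe, List.map_append, Multiset.cons_coe, Multiset.coe_eq_coe]
    refine List.perm_middle.trans (.cons g₁ ?_)
    rw [← List.append_assoc]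
    exact List.perm_middle
  · simp only [List.prod_append, List.prod_cons, ← Subgroup.val_list_prod, Subgroup.coe_mul,
      MulEquiv.toMonoidHom_eq_coe, MonoidHom.coe_coe, MulAut.conjNormal_apply]
    group

theorem ncard_twistedProdSet_le_ncard_prodSet [Finite G] (g₁ g₂ : G) (T : Multiset N) :
    (twistedProdSet (MulAut.conjNormal (g₁ * g₂)⁻¹).toMonoidHom
      (MulAut.conjNormal g₂⁻¹).toMonoidHom T).ncard ≤
      (prodSet (g₁ ::ₘ g₂ ::ₘ T.map (↑))).ncard := by
  rw [← Set.ncard_image_of_injective _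
    ((mul_right_injective (g₁ * g₂)).comp Subtype.val_injective)]
  refine Set.ncard_le_ncard ?_ (Set.toFinite _)
  rintro _ ⟨x, hx, rfl⟩
  exact mul_mem_prodSet_of_mem_twistedProdSet g₁ g₂ hx

end Conjugation

theorem stmt9 (p q : ℕ) (hp : p.Prime) (hq : q.Prime) (hpq : p ∣ q - 1)
    (G : Type*) [Group G] [Finite G] (hG : Nat.card G = p * q)
    (hna : ¬ ∀ a b : G, a * b = b * a)
    (S : Multiset G) (hS : ∀ g ∈ S, g ∈ commutator G ∧ g ≠ 1)
    (g₁ g₂ : G) (hg₁ : g₁ ∉ commutator G) (hg₂ : g₂ ∉ commutator G)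
    (hg₁g₂ : g₁ * g₂ ∉ commutator G) :
    min q (2 * Multiset.card S + 1) ≤ (prodSet (g₁ ::ₘ g₂ ::ₘ S)).ncard := by
  have hpq : p < q :=
    (Nat.le_of_dvd (Nat.sub_pos_of_lt hq.one_lt) hpq).trans_lt (Nat.sub_lt hq.pos one_pos)
  replace hna : ¬ IsMulCommutative G := mt isMulCommutative_iff.mp hna
  have hN := card_commutator_of_card_eq_mul hp hq hpq hG hna
  have hNi := Subgroup.index_eq_of_card_eq_mul hq.pos hG hN
  have hfix {g : G} (hg : g⁻¹ ∉ commutator G) {s : commutator G} (hs : s ≠ 1) :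
      MulAut.conjNormal g s ≠ s :=
    MulAut.conjNormal_ne_self_of_card_prime_of_index_prime (hN ▸ hq) (hNi ▸ hp) hna
      (inv_mem_iff.not.mp hg) hs
  have : Fact q.Prime := ⟨hq⟩
  lift S to Multiset (commutator G) using fun g hg => (hS g hg).1
  have hS1 (s : commutator G) (hs : s ∈ S) : s ≠ 1 := fun h =>
    (hS _ (Multiset.mem_map_of_mem _ hs)).2 (by simp [h])
  have hφψ (s : commutator G) (hs : s ≠ 1) :
      MulAut.conjNormal (g₁ * g₂)⁻¹ s ≠ MulAut.conjNormal g₂⁻¹ s := fun h =>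
    hfix (g := g₁⁻¹) (by rwa [inv_inv]) hs <| (MulAut.conjNormal g₂⁻¹).injective <| by
      simpa [mul_inv_rev, map_mul] using h
  rw [Multiset.card_map]
  exact (min_le_ncard_twistedProdSet _ _ hN (fun _ => hfix (by rwa [inv_inv]))
    (fun _ => hfix (by rwa [inv_inv])) hφψ S hS1).trans
    (ncard_twistedProdSet_le_ncard_prodSet g₁ g₂ S)
end

section
/- Let p and q be primes with p dividing q−1, let G be a finite non-abelian group of order pq, and let S be a sequence over G \ {1} whose set of terms generates G. Then |π(S)| ≥ min{p, |S|}. -/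
section Helpers

variable {G : Type*} [Group G]

lemma prodSet_nonempty (S : Multiset G) : (prodSet S).Nonempty :=
  ⟨S.toList.prod, S.toList, Multiset.coe_toList S, rfl⟩

lemma subgroup_eq_of_le_of_card_le [Finite G] {H K : Subgroup G} (h : H ≤ K)
    (hc : Nat.card K ≤ Nat.card H) : H = K := by
  apply SetLike.ext'
  apply Set.eq_of_subset_of_ncard_le h _ (Set.toFinite _)
  rw [← Nat.card_coe_set_eq, ← Nat.card_coe_set_eq]
  exact hc

lemma conj_comm_aux (c g x : G) (h1 : c * g = g * c)
    (h2 : c * (g * x * g⁻¹) = (g * x * g⁻¹) * c) : c * x = x * c := by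
  have h1c : Commute c g := h1
  have h2c : Commute c (g * x * g⁻¹) := h2
  have h3 : Commute c (g⁻¹ * (g * x * g⁻¹ * g)) :=
    h1c.inv_right.mul_right (h2c.mul_right h1c)
  have h4 : g⁻¹ * (g * x * g⁻¹ * g) = x := by group
  rwa [h4] at h3

lemma stepGen [Finite G] [DecidableEq G] (c : ℕ) {S : Multiset G} {u : G} (hu : u ∈ S)
    (hkey : ∀ d : ℕ, 0 < d → d < c → ∀ h ∈ prodSet (S.erase u),
      u ^ d * h = h * u ^ d → u * h = h * u) :
    (∀ h ∈ prodSet (S.erase u), u * h = h * u) ∨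
      min c ((prodSet (S.erase u)).ncard + 1) ≤ (prodSet S).ncard := by
  classical
  have hcons : u ::ₘ S.erase u = S := Multiset.cons_erase hu
  set P : Set G := prodSet (S.erase u) with hP
  have hfin : (prodSet S).Finite := Set.toFinite _
  have hA : (fun h => u * h) '' P ⊆ prodSet S := by
    rintro _ ⟨h, ⟨l, hl, rfl⟩, rfl⟩
    refine ⟨u :: l, ?_, List.prod_cons⟩
    rw [← hcons, ← hl]
    rfl
  have hB : (fun h => h * u) '' P ⊆ prodSet S := by
    rintro _ ⟨h, ⟨l, hl, rfl⟩, rfl⟩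
    refine ⟨l ++ [u], ?_, by simp⟩
    rw [← hcons, ← hl]
    rw [show ((u ::ₘ (l : Multiset G)) = ((u :: l : List G) : Multiset G)) from (Multiset.cons_coe u l)]
    exact Multiset.coe_eq_coe.mpr (List.perm_append_singleton u l)
  have hcardA : ((fun h => u * h) '' P).ncard = P.ncard :=
    Set.ncard_image_of_injective _ (mul_right_injective u)
  have hcardB : ((fun h => h * u) '' P).ncard = P.ncard :=
    Set.ncard_image_of_injective _ (mul_left_injective u)
  by_cases hAB : (fun h => u * h) '' P = (fun h => h * u) '' P
  · by_cases hcm : ∀ h ∈ P, u * h = h * u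
    · exact Or.inl hcm
    · right
      push_neg at hcm
      obtain ⟨h, hhP, hnc⟩ := hcm
      have hconj : ∀ x ∈ P, u * x * u⁻¹ ∈ P := by
        intro x hx
        have hmem : u * x ∈ (fun h => h * u) '' P := hAB ▸ ⟨x, hx, rfl⟩
        obtain ⟨y, hy, hyx⟩ := hmem
        have : u * x * u⁻¹ = y := by
          simp only at hyx
          rw [← hyx]
          group
        rwa [this]
      have horb : ∀ i : ℕ, u ^ i * h * (u ^ i)⁻¹ ∈ P := by
        intro i
        induction i with
        | zero => simpa using hhP
        | succ n ih =>
          have hnext := hconj _ ih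
          have e : u ^ (n + 1) * h * (u ^ (n + 1))⁻¹
              = u * (u ^ n * h * (u ^ n)⁻¹) * u⁻¹ := by
            rw [pow_succ']
            group
          rw [e]
          exact hnext
      have key : ∀ i j : ℕ, i < j → j < c →
          u ^ i * h * (u ^ i)⁻¹ = u ^ j * h * (u ^ j)⁻¹ → False := by
        intro i j hij hjc heq
        have hpow : u ^ (j - i) * u ^ i = u ^ j := by
          rw [← pow_add]
          congr 1
          omega
        have hd : u ^ (j - i) * (u ^ i * h * (u ^ i)⁻¹) * (u ^ (j - i))⁻¹
            = u ^ i * h * (u ^ i)⁻¹ := by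
          have e2 : u ^ (j - i) * (u ^ i * h * (u ^ i)⁻¹) * (u ^ (j - i))⁻¹
              = (u ^ (j - i) * u ^ i) * h * (u ^ (j - i) * u ^ i)⁻¹ := by
            group
          rw [e2, hpow, ← heq]
        have hcomm' : u ^ (j - i) * (u ^ i * h * (u ^ i)⁻¹)
            = (u ^ i * h * (u ^ i)⁻¹) * u ^ (j - i) := by
          have := congrArg (fun z => z * u ^ (j - i)) hd
          rw [← this]
          group
        have hcu : u ^ (j - i) * h = h * u ^ (j - i) :=
          conj_comm_aux _ _ _ ((Commute.pow_pow_self u (j - i) i).eq) hcomm'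
        exact hnc (hkey (j - i) (by omega) (by omega) h hhP hcu)
      have hinj : Function.Injective
          (fun i : Fin c => u ^ (i : ℕ) * h * (u ^ (i : ℕ))⁻¹) := by
        intro i j hij
        simp only at hij
        rcases lt_trichotomy (i : ℕ) (j : ℕ) with hlt | heq | hgt
        · exact absurd hij (fun hh => key _ _ hlt j.isLt hh)
        · exact Fin.ext heq
        · exact absurd hij.symm (fun hh => key _ _ hgt i.isLt hh)
      have hrange : Set.range (fun i : Fin c => u ^ (i : ℕ) * h * (u ^ (i : ℕ))⁻¹) ⊆ P :=
        Set.range_subset_iff.mpr fun i => horb i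
      have hc_le : c ≤ P.ncard := by
        have h1 : (Set.range (fun i : Fin c => u ^ (i : ℕ) * h * (u ^ (i : ℕ))⁻¹)).ncard = c := by
          rw [← Set.image_univ, Set.ncard_image_of_injective _ hinj, Set.ncard_univ,
            Nat.card_eq_fintype_card, Fintype.card_fin]
        rw [← h1]
        exact Set.ncard_le_ncard hrange (Set.toFinite _)
      have : c ≤ (prodSet S).ncard := by
        refine le_trans hc_le ?_
        rw [← hcardA]
        exact Set.ncard_le_ncard hA hfin
      exact le_trans (min_le_left _ _) this
  · right
    have hBA : ¬((fun h => h * u) '' P ⊆ (fun h => u * h) '' P) := by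
      intro hsub
      exact hAB (Set.eq_of_subset_of_ncard_le hsub
        (by rw [hcardA, hcardB]) (Set.toFinite _)).symm
    obtain ⟨x, hxB, hxA⟩ := Set.not_subset.mp hBA
    have hins : insert x ((fun h => u * h) '' P) ⊆ prodSet S :=
      Set.insert_subset (hB hxB) hA
    have hle : ((fun h => u * h) '' P).ncard + 1 ≤ (prodSet S).ncard := by
      rw [← Set.ncard_insert_of_notMem hxA (Set.toFinite _)]
      exact Set.ncard_le_ncard hins hfin
    rw [hcardA] at hle
    exact le_trans (min_le_right _ _) hle

end Helpers

section Main

variable {G : Type*} [Group G] [Finite G]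

lemma mainLemma [DecidableEq G] (p q : ℕ) (hp : p.Prime) (hplt : p < q)
    (N : Subgroup G)
    (hordu : ∀ u : G, u ∉ N → orderOf u = p)
    (hordt : ∀ t : G, t ∈ N → t ≠ 1 → orderOf t = q)
    (hCnc : ∀ u : G, u ∉ N → ∀ t : G, t ∈ N → t ≠ 1 → u * t ≠ t * u)
    (hCz : ∀ c : G, c ∉ N → ∀ a b : G, a * c = c * a → b * c = c * b → a * b = b * a)
    (hNc : ∀ a ∈ N, ∀ b ∈ N, a * b = b * a)
    (hco : ∀ T : Multiset G, ∀ h₁ ∈ prodSet T, ∀ h₂ ∈ prodSet T, h₁⁻¹ * h₂ ∈ N)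
    (hcosetN : ∀ (T : Multiset G) (u : G), u ∈ T → u ∉ N → (∀ x ∈ T.erase u, x ∈ N) →
      ∀ h ∈ prodSet T, h ∉ N) :
    ∀ (n : ℕ) (S : Multiset G), Multiset.card S = n → (∀ g ∈ S, g ≠ 1) →
      (∃ a ∈ S, ∃ b ∈ S, a * b ≠ b * a) →
      min p (Multiset.card S) ≤ (prodSet S).ncard := by
  classical
  have hp2 : 2 ≤ p := hp.two_le
  intro n
  induction n using Nat.strong_induction_on with
  | _ n IH =>
  intro S hcardS hS hval
  obtain ⟨a, ha, b, hb, hab⟩ := hval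
  have hab' : a ≠ b := fun h => hab (h ▸ rfl)
  have hbe : b ∈ S.erase a := (Multiset.mem_erase_of_ne hab'.symm).mpr hb
  have hcard_ea : Multiset.card (S.erase a) = Multiset.card S - 1 := by
    rw [Multiset.card_erase_of_mem ha, Nat.pred_eq_sub_one]
  have h1le : 1 ≤ Multiset.card (S.erase a) :=
    Multiset.card_pos.mpr (fun h0 => by simp [h0] at hbe)
  have hcard2 : 2 ≤ Multiset.card S := by omega
  by_cases hn3 : Multiset.card S ≤ 2
  · -- base case : |S| = 2
    have hc2 : Multiset.card S = 2 := le_antisymm hn3 hcard2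
    have hce : Multiset.card (S.erase a) = 1 := by omega
    obtain ⟨x, hx⟩ := Multiset.card_eq_one.mp hce
    have hbx : b = x := by rw [hx] at hbe; simpa using hbe
    have hSab : S = a ::ₘ {b} := by rw [← Multiset.cons_erase ha, hx, hbx]
    have h1 : a * b ∈ prodSet S := by
      refine ⟨[a, b], ?_, by simp⟩
      rw [hSab]; rfl
    have h2 : b * a ∈ prodSet S := by
      refine ⟨[b, a], ?_, by simp⟩
      rw [hSab]
      exact Multiset.cons_swap b a 0
    have hsub : ({a * b, b * a} : Set G) ⊆ prodSet S := by
      rintro x (rfl | rfl)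
      · exact h1
      · exact h2
    have h2le : 2 ≤ (prodSet S).ncard := by
      rw [← Set.ncard_pair hab]
      exact Set.ncard_le_ncard hsub (Set.toFinite _)
    omega
  · push_neg at hn3
    -- |S| ≥ 3
    -- generic removal of a non-N element (a "rotation")
    have rotCase : ∀ u ∈ S, u ∉ N →
        (∃ x ∈ S.erase u, ∃ y ∈ S.erase u, x * y ≠ y * x) →
        min p (Multiset.card S) ≤ (prodSet S).ncard := by
      intro u huS huN hval'
      have hcard_eu : Multiset.card (S.erase u) = Multiset.card S - 1 := by
        rw [Multiset.card_erase_of_mem huS, Nat.pred_eq_sub_one]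
      have hIH : min p (Multiset.card (S.erase u)) ≤ (prodSet (S.erase u)).ncard :=
        IH (Multiset.card (S.erase u)) (by omega) (S.erase u) rfl
          (fun g hg => hS g (Multiset.mem_of_mem_erase hg)) hval'
      have hc2' : 2 ≤ (prodSet (S.erase u)).ncard := by omega
      have hkey : ∀ d : ℕ, 0 < d → d < p → ∀ h ∈ prodSet (S.erase u),
          u ^ d * h = h * u ^ d → u * h = h * u := by
        intro d hd0 hdp h hh hcomm
        have hou : orderOf u = p := hordu u huN
        have hgcd : Nat.gcd (orderOf u) d = 1 := by
          rw [hou]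
          exact (Nat.Prime.coprime_iff_not_dvd hp).mpr (Nat.not_dvd_of_pos_of_lt hd0 hdp)
        have hod : orderOf (u ^ d) = p := by
          rw [orderOf_pow, hgcd, Nat.div_one, hou]
        have hzp : Subgroup.zpowers (u ^ d) = Subgroup.zpowers u := by
          apply subgroup_eq_of_le_of_card_le
          · exact Subgroup.zpowers_le.mpr (Subgroup.npow_mem_zpowers u d)
          · rw [Nat.card_zpowers, Nat.card_zpowers, hou, hod]
        obtain ⟨k, hk⟩ := Subgroup.mem_zpowers_iff.mp (hzp ▸ Subgroup.mem_zpowers u)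
        have hcomm' : Commute (u ^ d) h := hcomm
        have := hcomm'.zpow_left k
        rw [hk] at this
        exact this.eq
      rcases stepGen p huS hkey with hcm | hstep
      · -- all products commute with u ⇒ prodSet (S.erase u) is a subsingleton : contradiction
        exfalso
        obtain ⟨h₀, hh₀⟩ := prodSet_nonempty (S.erase u)
        have hsub : prodSet (S.erase u) ⊆ {h₀} := by
          intro h₁ hh₁
          by_contra hne
          have hne' : h₀ ≠ h₁ := fun h => hne (by simp [h.symm])
          have hd := hco (S.erase u) h₀ hh₀ h₁ hh₁
          have hd1 : h₀⁻¹ * h₁ ≠ 1 := by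
            intro h
            exact hne' (by rwa [inv_mul_eq_one] at h)
          have hcd : u * (h₀⁻¹ * h₁) = (h₀⁻¹ * h₁) * u := by
            have c1 : Commute u h₀ := hcm h₀ hh₀
            have c2 : Commute u h₁ := hcm h₁ hh₁
            exact (c1.inv_right.mul_right c2).eq
          exact hCnc u huN _ hd hd1 hcd
        have : (prodSet (S.erase u)).ncard ≤ 1 := by
          have := Set.ncard_le_ncard hsub (Set.toFinite _)
          simpa using this
        omega
      · omega
    by_cases htr : ∃ t ∈ S, t ∈ N
    · obtain ⟨t, htS, htN⟩ := htr
      have ht1 : t ≠ 1 := hS t htS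
      have hrotex : ∃ u ∈ S, u ∉ N := by
        by_contra hcon
        push_neg at hcon
        exact hab (hNc a (hcon a ha) b (hcon b hb))
      by_cases hrot2 : ∃ u ∈ S, u ∉ N ∧ ∃ u' ∈ S.erase u, u' ∉ N
      · obtain ⟨u, huS, huN, u', hu'S, hu'N⟩ := hrot2
        have htu : t ≠ u := fun h => huN (h ▸ htN)
        have htS' : t ∈ S.erase u := (Multiset.mem_erase_of_ne htu).mpr htS
        exact rotCase u huS huN ⟨u', hu'S, t, htS', hCnc u' hu'N t htN ht1⟩
      · -- exactly one rotation u ; remove the translation t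
        obtain ⟨u, huS, huN⟩ := hrotex
        push_neg at hrot2
        have hrest : ∀ x ∈ S.erase u, x ∈ N := by
          intro x hx
          by_contra hxN
          exact hxN (hrot2 u huS huN x hx)
        have hut : u ≠ t := fun h => huN (h ▸ htN)
        have huS' : u ∈ S.erase t := (Multiset.mem_erase_of_ne hut).mpr huS
        have hrest' : ∀ x ∈ (S.erase t).erase u, x ∈ N := by
          intro x hx
          rw [Multiset.erase_comm] at hx
          exact hrest x (Multiset.mem_of_mem_erase hx)
        have hcard_t : Multiset.card (S.erase t) = Multiset.card S - 1 := by
          rw [Multiset.card_erase_of_mem htS, Nat.pred_eq_sub_one]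
        have hcard_tu : Multiset.card ((S.erase t).erase u) = Multiset.card S - 2 := by
          rw [Multiset.card_erase_of_mem huS', hcard_t, Nat.pred_eq_sub_one]
          omega
        have hne0 : ((S.erase t).erase u) ≠ 0 := by
          intro h0
          rw [h0] at hcard_tu
          simp at hcard_tu
          omega
        obtain ⟨t', ht'⟩ := Multiset.exists_mem_of_ne_zero hne0
        have ht'N : t' ∈ N := hrest' t' ht'
        have ht'S' : t' ∈ S.erase t := Multiset.mem_of_mem_erase ht'
        have ht'1 : t' ≠ 1 := hS t' (Multiset.mem_of_mem_erase ht'S')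
        have hval' : ∃ x ∈ S.erase t, ∃ y ∈ S.erase t, x * y ≠ y * x :=
          ⟨u, huS', t', ht'S', hCnc u huN t' ht'N ht'1⟩
        have hIH : min p (Multiset.card (S.erase t)) ≤ (prodSet (S.erase t)).ncard :=
          IH (Multiset.card (S.erase t)) (by omega) (S.erase t) rfl
            (fun g hg => hS g (Multiset.mem_of_mem_erase hg)) hval'
        have hπ' : ∀ h ∈ prodSet (S.erase t), h ∉ N :=
          hcosetN (S.erase t) u huS' huN hrest'
        have hkey : ∀ d : ℕ, 0 < d → d < q → ∀ h ∈ prodSet (S.erase t),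
            t ^ d * h = h * t ^ d → t * h = h * t := by
          intro d hd0 hdq h hh hcomm
          exfalso
          have htd : t ^ d ∈ N := N.pow_mem htN d
          have htd1 : t ^ d ≠ 1 := by
            intro h1
            have := orderOf_dvd_of_pow_eq_one h1
            rw [hordt t htN ht1] at this
            have := Nat.le_of_dvd hd0 this
            omega
          exact hCnc h (hπ' h hh) (t ^ d) htd htd1 hcomm.symm
        rcases stepGen q htS hkey with hcm | hstep
        · exfalso
          obtain ⟨h₀, hh₀⟩ := prodSet_nonempty (S.erase t)
          exact hCnc h₀ (hπ' h₀ hh₀) t htN ht1 (hcm h₀ hh₀).symm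
        · omega
    · -- no translations at all in S
      push_neg at htr
      by_cases hval2 : ∃ u ∈ S, ∃ x ∈ S.erase u, ∃ y ∈ S.erase u, x * y ≠ y * x
      · obtain ⟨u, huS, hval'⟩ := hval2
        exact rotCase u huS (htr u huS) hval'
      · exfalso
        push_neg at hval2
        have hcard_ab : Multiset.card ((S.erase a).erase b) = Multiset.card S - 2 := by
          rw [Multiset.card_erase_of_mem hbe, hcard_ea, Nat.pred_eq_sub_one]
          omega
        have hne0 : ((S.erase a).erase b) ≠ 0 := by
          intro h0
          rw [h0] at hcard_ab
          simp at hcard_ab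
          omega
        obtain ⟨c, hc⟩ := Multiset.exists_mem_of_ne_zero hne0
        have hcS : c ∈ S := Multiset.mem_of_mem_erase (Multiset.mem_of_mem_erase hc)
        have hbc : b * c = c * b :=
          hval2 a ha b hbe c (Multiset.mem_of_mem_erase hc)
        have hacb : a ∈ S.erase b := (Multiset.mem_erase_of_ne hab').mpr ha
        have hccb : c ∈ S.erase b := by
          rw [Multiset.erase_comm] at hc
          exact Multiset.mem_of_mem_erase hc
        have hac : a * c = c * a := hval2 b hb a hacb c hccb
        exact hab (hCz c (htr c hcS) a b hac hbc)

end Main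

theorem stmt10 (p q : ℕ) (hp : p.Prime) (hq : q.Prime) (hpq : p ∣ q - 1)
    (G : Type*) [Group G] [Finite G] (hG : Nat.card G = p * q)
    (hna : ¬ ∀ a b : G, a * b = b * a)
    (S : Multiset G) (hS : ∀ g ∈ S, g ≠ 1)
    (hgen : Subgroup.closure {g : G | g ∈ S} = ⊤) :
    min p (Multiset.card S) ≤ (prodSet S).ncard := by
  classical
  have hp2 : 2 ≤ p := hp.two_le
  have hq2 : 2 ≤ q := hq.two_le
  have hple : p ≤ q - 1 := Nat.le_of_dvd (by omega) hpq
  have hplt : p < q := by omega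
  have hpq' : p ≠ q := by omega
  haveI : Fact q.Prime := ⟨hq⟩
  haveI : Fact p.Prime := ⟨hp⟩
  letI : Fintype G := Fintype.ofFinite G
  -- divisors of p * q
  have hdiv : ∀ d : ℕ, d ∣ p * q → d = 1 ∨ d = p ∨ d = q ∨ d = p * q := by
    intro d hd
    by_cases hpd : p ∣ d
    · obtain ⟨e, rfl⟩ := hpd
      have he : e ∣ q := by
        have := (mul_dvd_mul_iff_left (show p ≠ 0 by omega)).mp hd
        exact this
      rcases (Nat.Prime.eq_one_or_self_of_dvd hq e he) with h | h
      · subst h; right; left; omega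
      · subst h; right; right; right; rfl
    · have hcop : Nat.Coprime d p := by
        rcases Nat.coprime_or_dvd_of_prime hp d with h | h
        · exact h.symm
        · exact absurd h hpd
      have : d ∣ q := (Nat.Coprime.dvd_of_dvd_mul_left hcop hd)
      rcases (Nat.Prime.eq_one_or_self_of_dvd hq d this) with h | h
      · left; exact h
      · right; right; left; exact h
  -- the center is trivial
  have habel : ∀ z : G, z ∈ Subgroup.center G → z = 1 := by
    intro z hz
    by_contra hz1
    have hZdvd : Nat.card (Subgroup.center G) ∣ p * q := by
      rw [← hG]; exact Subgroup.card_subgroup_dvd_card _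
    have hZne : Nat.card (Subgroup.center G) ≠ 1 := by
      intro h
      rw [Subgroup.card_eq_one.mp h] at hz
      exact hz1 (Subgroup.mem_bot.mp hz)
    have hqz := Subgroup.card_eq_card_quotient_mul_card_subgroup (Subgroup.center G)
    rw [hG] at hqz
    have hcyc : IsCyclic (G ⧸ Subgroup.center G) := by
      rcases hdiv _ hZdvd with h | h | h | h
      · exact absurd h hZne
      · -- card center = p, quotient has card q
        have : Nat.card (G ⧸ Subgroup.center G) = q := by
          rw [h] at hqz
          apply Nat.eq_of_mul_eq_mul_right (show 0 < p by omega)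
          rw [← hqz]
          exact Nat.mul_comm p q
        exact isCyclic_of_prime_card this
      · have : Nat.card (G ⧸ Subgroup.center G) = p := by
          rw [h] at hqz
          apply Nat.eq_of_mul_eq_mul_right (show 0 < q by omega)
          rw [← hqz]
        exact isCyclic_of_prime_card this
      · have : Nat.card (G ⧸ Subgroup.center G) = 1 := by
          rw [h] at hqz
          apply Nat.eq_of_mul_eq_mul_right (show 0 < p * q by positivity)
          rw [one_mul, ← hqz]
        haveI : Subsingleton (G ⧸ Subgroup.center G) :=
          (Nat.card_eq_one_iff_unique.mp this).1
        infer_instance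
    exact hna (commutative_of_cyclic_center_quotient (QuotientGroup.mk' (Subgroup.center G))
      (by rw [QuotientGroup.ker_mk']))
  -- the normal Sylow q-subgroup
  obtain ⟨Q⟩ : Nonempty (Sylow q G) := inferInstance
  have hcardN : Nat.card (Q : Subgroup G) = q := by
    have hfact : (Nat.card G).factorization q = 1 := by
      rw [hG, Nat.factorization_mul (by omega) (by omega)]
      rw [hp.factorization, hq.factorization]
      simp [Finsupp.single_apply, hpq']
    rw [Sylow.card_eq_multiplicity, hfact, pow_one]
  have hindex : (Q : Subgroup G).index = p := by
    have h := Subgroup.card_mul_index (Q : Subgroup G)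
    rw [hcardN, hG] at h
    apply Nat.eq_of_mul_eq_mul_left (show 0 < q by omega)
    rw [h]; ring
  haveI hnormal : (Q : Subgroup G).Normal := by
    have hdvd : Nat.card (Sylow q G) ∣ p := by
      rw [← hindex]; exact Sylow.card_dvd_index Q
    have hmod := card_sylow_modEq_one q G
    have hcard1 : Nat.card (Sylow q G) = 1 := by
      rcases (Nat.Prime.eq_one_or_self_of_dvd hp _ hdvd) with h | h
      · exact h
      · exfalso
        rw [h] at hmod
        have : q ∣ p - 1 := (Nat.modEq_iff_dvd' (by omega)).mp hmod.symm
        have := Nat.le_of_dvd (by omega) this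
        omega
    haveI : Subsingleton (Sylow q G) := (Nat.card_eq_one_iff_unique.mp hcard1).1
    rw [← Subgroup.normalizer_eq_top_iff]
    rw [eq_top_iff]
    intro g _
    exact Sylow.smul_eq_iff_mem_normalizer.mp (Subsingleton.elim _ _)
  set N : Subgroup G := (Q : Subgroup G) with hN
  -- quotient facts
  have hqcard : Nat.card (G ⧸ N) = p := by
    have h := Subgroup.card_eq_card_quotient_mul_card_subgroup N
    rw [hG, hcardN] at h
    apply Nat.eq_of_mul_eq_mul_right (show 0 < q by omega)
    rw [← h]
  haveI hqcyc : IsCyclic (G ⧸ N) := isCyclic_of_prime_card hqcard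
  letI : CommGroup (G ⧸ N) := IsCyclic.commGroup
  set ψ : G →* G ⧸ N := QuotientGroup.mk' N with hψ
  have hker : ∀ x : G, ψ x = 1 ↔ x ∈ N := fun x => QuotientGroup.eq_one_iff x
  -- order facts
  have hordu : ∀ u : G, u ∉ N → orderOf u = p := by
    intro u hu
    have hdvdu : orderOf u ∣ p * q := by rw [← hG]; exact orderOf_dvd_natCard u
    rcases hdiv _ hdvdu with h | h | h | h
    · exact absurd (orderOf_eq_one_iff.mp h ▸ N.one_mem) hu
    · exact h
    · exfalso
      have d1 : orderOf (ψ u) ∣ q := h ▸ orderOf_map_dvd ψ u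
      have d2 : orderOf (ψ u) ∣ p := hqcard ▸ orderOf_dvd_natCard (ψ u)
      have hgcd : Nat.gcd q p = 1 := (Nat.coprime_primes hq hp).mpr (Ne.symm hpq')
      have : orderOf (ψ u) = 1 := Nat.dvd_one.mp (hgcd ▸ Nat.dvd_gcd d1 d2)
      exact hu ((hker u).mp (orderOf_eq_one_iff.mp this))
    · exfalso
      have htop : Subgroup.zpowers u = ⊤ := by
        apply Subgroup.eq_top_of_card_eq
        rw [Nat.card_zpowers, h, hG]
      apply hna
      intro x y
      obtain ⟨i, hi⟩ := Subgroup.mem_zpowers_iff.mp (htop ▸ Subgroup.mem_top x)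
      obtain ⟨j, hj⟩ := Subgroup.mem_zpowers_iff.mp (htop ▸ Subgroup.mem_top y)
      rw [← hi, ← hj]
      exact ((Commute.refl u).zpow_zpow i j).eq
  have hordt : ∀ t : G, t ∈ N → t ≠ 1 → orderOf t = q := by
    intro t htN ht1
    have hdvdt : orderOf t ∣ q := by
      rw [← hcardN]; exact Subgroup.orderOf_dvd_natCard N htN
    rcases (Nat.Prime.eq_one_or_self_of_dvd hq _ hdvdt) with h | h
    · exact absurd (orderOf_eq_one_iff.mp h) ht1
    · exact h
  have hzpN : ∀ t : G, t ∈ N → t ≠ 1 → Subgroup.zpowers t = N := by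
    intro t htN ht1
    apply subgroup_eq_of_le_of_card_le (Subgroup.zpowers_le.mpr htN)
    rw [Nat.card_zpowers, hordt t htN ht1, hcardN]
  have hNc : ∀ a ∈ N, ∀ b ∈ N, a * b = b * a := by
    intro a haN b hbN
    by_cases ha1 : a = 1
    · simp [ha1]
    · have hzp := hzpN a haN ha1
      obtain ⟨k, hk⟩ := Subgroup.mem_zpowers_iff.mp (hzp ▸ hbN : b ∈ Subgroup.zpowers a)
      rw [← hk]
      exact ((Commute.refl a).zpow_right k).eq
  have hCnc : ∀ u : G, u ∉ N → ∀ t : G, t ∈ N → t ≠ 1 → u * t ≠ t * u := by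
    intro u hu t htN ht1 hcomm
    set C := Subgroup.centralizer ({t} : Set G) with hC
    have hNC : N ≤ C := by
      intro x hx
      rw [Subgroup.mem_centralizer_iff]
      intro y hy
      rw [Set.mem_singleton_iff] at hy
      rw [hy]
      exact hNc t htN x hx
    have hUC : u ∈ C := by
      rw [Subgroup.mem_centralizer_iff]
      intro y hy
      rw [Set.mem_singleton_iff] at hy
      rw [hy]
      exact hcomm.symm
    have hCdvd : Nat.card C ∣ p * q := by rw [← hG]; exact Subgroup.card_subgroup_dvd_card C
    have hqC : q ∣ Nat.card C := by rw [← hcardN]; exact Subgroup.card_dvd_of_le hNC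
    have hCne : C ≠ N := fun h => hu (h ▸ hUC)
    have hCcard : Nat.card C = p * q := by
      rcases hdiv _ hCdvd with h | h | h | h
      · rw [h] at hqC; have := Nat.le_of_dvd (by omega) hqC; omega
      · rw [h] at hqC; have := Nat.le_of_dvd (by omega) hqC; omega
      · exfalso
        exact hCne (subgroup_eq_of_le_of_card_le hNC (by rw [h, hcardN])).symm
      · exact h
    have hCtop : C = ⊤ := Subgroup.eq_top_of_card_eq _ (by rw [hCcard, hG])
    have htZ : t ∈ Subgroup.center G := by
      rw [Subgroup.mem_center_iff]
      intro g
      have hg : g ∈ C := hCtop ▸ Subgroup.mem_top g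
      rw [Subgroup.mem_centralizer_iff] at hg
      exact (hg t (Set.mem_singleton t)).symm
    exact ht1 (habel t htZ)
  have hCz : ∀ c : G, c ∉ N → ∀ a b : G, a * c = c * a → b * c = c * b → a * b = b * a := by
    intro c hcN a b hac hbc
    set C := Subgroup.centralizer ({c} : Set G) with hC
    have hmemC : ∀ x : G, x * c = c * x → x ∈ C := by
      intro x hx
      rw [Subgroup.mem_centralizer_iff]
      intro y hy
      rw [Set.mem_singleton_iff] at hy
      rw [hy]
      exact hx.symm
    have haC : a ∈ C := hmemC a hac
    have hbC : b ∈ C := hmemC b hbc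
    have hcC : c ∈ C := hmemC c rfl
    have hCdvd : Nat.card C ∣ p * q := by rw [← hG]; exact Subgroup.card_subgroup_dvd_card C
    have hqC : ¬ q ∣ Nat.card C := by
      intro hdvd
      rw [Nat.card_eq_fintype_card] at hdvd
      obtain ⟨x, hx⟩ := exists_prime_orderOf_dvd_card q hdvd
      have hxG : orderOf (x : G) = q := (Subgroup.orderOf_coe x).trans hx
      have hx1 : (x : G) ≠ 1 := by
        intro h
        rw [h, orderOf_one] at hxG
        omega
      have hxN : (x : G) ∈ N := by
        by_contra hxn
        rw [hordu _ hxn] at hxG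
        omega
      have hxc : (x : G) * c = c * (x : G) := by
        have hx2 : (x : G) ∈ Subgroup.centralizer ({c} : Set G) := x.2
        rw [Subgroup.mem_centralizer_iff] at hx2
        exact (hx2 c (Set.mem_singleton c)).symm
      exact hCnc c hcN (x : G) hxN hx1 hxc.symm
    have hpC : p ∣ Nat.card C := by
      rw [← hordu c hcN, ← Nat.card_zpowers]
      exact Subgroup.card_dvd_of_le (Subgroup.zpowers_le.mpr hcC)
    have hCp : Nat.card C = p := by
      rcases hdiv _ hCdvd with h | h | h | h
      · rw [h] at hpC; have := Nat.le_of_dvd (by omega) hpC; omega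
      · exact h
      · exact absurd (h ▸ dvd_refl _) hqC
      · exact absurd (h ▸ dvd_mul_left q p) hqC
    have hCzp : C = Subgroup.zpowers c :=
      (subgroup_eq_of_le_of_card_le (Subgroup.zpowers_le.mpr hcC)
        (by rw [hCp, Nat.card_zpowers, hordu c hcN])).symm
    obtain ⟨i, hi⟩ := Subgroup.mem_zpowers_iff.mp (hCzp ▸ haC : a ∈ Subgroup.zpowers c)
    obtain ⟨j, hj⟩ := Subgroup.mem_zpowers_iff.mp (hCzp ▸ hbC : b ∈ Subgroup.zpowers c)
    rw [← hi, ← hj]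
    exact ((Commute.refl c).zpow_zpow i j).eq
  -- coset facts
  have hco : ∀ T : Multiset G, ∀ h₁ ∈ prodSet T, ∀ h₂ ∈ prodSet T, h₁⁻¹ * h₂ ∈ N := by
    rintro T h₁ ⟨l₁, hl₁, rfl⟩ h₂ ⟨l₂, hl₂, rfl⟩
    have hperm : l₁.Perm l₂ := Multiset.coe_eq_coe.mp (hl₁.trans hl₂.symm)
    have heq : ψ l₁.prod = ψ l₂.prod := by
      rw [map_list_prod, map_list_prod]
      exact (hperm.map ψ).prod_eq
    rw [← hker]
    rw [map_mul, map_inv, heq, inv_mul_cancel]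
  have hcosetN : ∀ (T : Multiset G) (u : G), u ∈ T → u ∉ N → (∀ x ∈ T.erase u, x ∈ N) →
      ∀ h ∈ prodSet T, h ∉ N := by
    rintro T u huT huN hrest h ⟨l, hl, rfl⟩ hmem
    apply huN
    have h2 : T.map ψ = ψ u ::ₘ (T.erase u).map ψ := by
      rw [← Multiset.map_cons, Multiset.cons_erase huT]
    have h3 : ((T.erase u).map ψ).prod = 1 := by
      apply Multiset.prod_eq_one
      rintro x hx
      obtain ⟨y, hy, rfl⟩ := Multiset.mem_map.mp hx
      exact (hker y).mpr (hrest y hy)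
    have h4 : ψ l.prod = ψ u := by
      rw [map_list_prod]
      have h5 : ((l.map ψ : List (G ⧸ N)) : Multiset (G ⧸ N)) = T.map ψ := by
        rw [← Multiset.map_coe, hl]
      calc (l.map ψ).prod = ((l.map ψ : List (G ⧸ N)) : Multiset (G ⧸ N)).prod := by
            rw [Multiset.prod_coe]
        _ = (T.map ψ).prod := by rw [h5]
        _ = ψ u * ((T.erase u).map ψ).prod := by rw [h2, Multiset.prod_cons]
        _ = ψ u := by rw [h3, mul_one]
    have h6 : ψ l.prod = 1 := (hker _).mpr hmem
    exact (hker u).mp (h4 ▸ h6)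
  -- validity of S
  have hval : ∃ a ∈ S, ∃ b ∈ S, a * b ≠ b * a := by
    by_contra hcall
    push_neg at hcall
    apply hna
    have h1 : ∀ g ∈ {g : G | g ∈ S}, ∀ x ∈ Subgroup.closure {g : G | g ∈ S},
        x * g = g * x := by
      intro g hg x hx
      have hle : Subgroup.closure {g : G | g ∈ S} ≤ Subgroup.centralizer {g} := by
        apply (Subgroup.closure_le _).mpr
        intro g' hg'
        rw [SetLike.mem_coe, Subgroup.mem_centralizer_iff]
        intro z hz
        rw [Set.mem_singleton_iff] at hz
        rw [hz]
        exact hcall g hg g' hg'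
      have hxc := hle hx
      rw [Subgroup.mem_centralizer_iff] at hxc
      exact (hxc g (Set.mem_singleton g)).symm
    intro x y
    have hxc : x ∈ Subgroup.closure {g : G | g ∈ S} := by
      rw [hgen]; exact Subgroup.mem_top x
    have hyc : y ∈ Subgroup.closure {g : G | g ∈ S} := by
      rw [hgen]; exact Subgroup.mem_top y
    have hle : Subgroup.closure {g : G | g ∈ S} ≤ Subgroup.centralizer {x} := by
      apply (Subgroup.closure_le _).mpr
      intro g hg
      rw [SetLike.mem_coe, Subgroup.mem_centralizer_iff]
      intro z hz
      rw [Set.mem_singleton_iff] at hz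
      rw [hz]
      exact h1 g hg x hxc
    have hy2 := hle hyc
    rw [Subgroup.mem_centralizer_iff] at hy2
    exact hy2 x (Set.mem_singleton x)
  exact mainLemma p q hp hplt N hordu hordt hCnc hCz hNc hco hcosetN
    (Multiset.card S) S rfl hS hval
end

section
/- Let p and q be primes with p dividing q−1, and let G be a finite non-abelian group of order pq (the group F_pq). Then d(G) = q + p − 2. -/
/-!
Let `N` be the normal Sylow `q`-subgroup, so that `G ⧸ N` is cyclic of order `p`.
A generator `a` of `N` and an element `b` mapping to a generator of `G ⧸ N` give the
product-one free sequence `a^[q-1] b^[p-1]`.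

Conversely, let `S` be product-one free. As long as `|S| ≥ p`, a pigeonhole argument on prefix
products in `G ⧸ N` yields a subsequence `B` that is minimal among nonempty subsequences having
an ordering with product `x ∈ N`. The cyclic rotations of that ordering have products
`π⁻¹ x π` with the prefix products `π` in pairwise distinct cosets of `N`; since `G` is
non-abelian, the centralizer of `x ≠ 1` is `N`, so these are `|B|` distinct nontrivial elements
of `N`. Peeling off such blocks and applying Cauchy–Davenport in `N ≅ C_q`, the subsequence
products of `S` lying in `N` number at least `min q (|S| - p + 2)`. For `|S| ≥ q + p - 1` this
leaves no room: the bound for `S` with one block removed and the `|B|` products of the block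
together exceed `q`, so some block product is inverse to a subsequence product of the rest.
-/

open Pointwise

section CauchyDavenport

variable {H : Type*} [Group H]

lemma natCard_le_minOrder_of_prime (hH : (Nat.card H).Prime) :
    (Nat.card H : ℕ∞) ≤ Monoid.minOrder H := by
  refine Monoid.le_minOrder.mpr fun a ha _ => ?_
  have := Nat.finite_of_card_ne_zero hH.ne_zero
  rcases hH.eq_one_or_self_of_dvd _ (orderOf_dvd_natCard a) with h | h
  · exact absurd (orderOf_eq_one_iff.mp h) ha
  · rw [h]

lemma min_le_card_mul_of_prime [DecidableEq H] (hH : (Nat.card H).Prime) {s t : Finset H}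
    (hs : s.Nonempty) (ht : t.Nonempty) :
    min (Nat.card H) (s.card + t.card - 1) ≤ (s * t).card := by
  have := (min_le_min_right _ (natCard_le_minOrder_of_prime hH)).trans
    (cauchy_davenport_minOrder_mul hs ht)
  simpa only [min_le_iff, Nat.cast_le] using this

lemma exists_mem_inv_mem_of_card_lt [Finite H] [DecidableEq H] {s t : Finset H}
    (h : Nat.card H < s.card + t.card) : ∃ a ∈ s, a⁻¹ ∈ t := by
  have hunion : (s⁻¹ ∪ t).card ≤ Nat.card H := by
    rw [← Set.ncard_coe_finset]; exact Set.ncard_le_card _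
  have := Finset.card_union_add_card_inter s⁻¹ t
  rw [Finset.card_inv] at this
  obtain ⟨x, hx⟩ : (s⁻¹ ∩ t).Nonempty := by rw [← Finset.card_pos]; omega
  rw [Finset.mem_inter, Finset.mem_inv'] at hx
  exact ⟨x⁻¹, hx.1, by simpa using hx.2⟩

end CauchyDavenport

section

variable {G : Type*} [Group G]

def IsProductOneFree (S : Multiset G) : Prop :=
  ∀ T ≤ S, T ≠ 0 → ¬ IsProductOne T

lemma IsProductOneFree.mono {S T : Multiset G} (hS : IsProductOneFree S) (hTS : T ≤ S) :
    IsProductOneFree T :=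
  fun U hUT => hS U (hUT.trans hTS)

lemma smallDavenport_eq {n : ℕ}
    (hub : ∀ S : Multiset G, IsProductOneFree S → Multiset.card S ≤ n)
    (hlb : ∃ S : Multiset G, Multiset.card S = n ∧ IsProductOneFree S) :
    smallDavenport G = n := by
  obtain ⟨S, hSn, hS⟩ := hlb
  refine le_antisymm (csSup_le ⟨n, S, hSn, hS⟩ ?_) (le_csSup ⟨n, ?_⟩ ⟨S, hSn, hS⟩)
  all_goals rintro _ ⟨S', rfl, hS'⟩; exact hub S' hS'

section ProdSet

lemma mul_mem_prodSet_add {S T : Multiset G} {g h : G} (hg : g ∈ prodSet S)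
    (hh : h ∈ prodSet T) : g * h ∈ prodSet (S + T) := by
  obtain ⟨l, rfl, rfl⟩ := hg
  obtain ⟨m, rfl, rfl⟩ := hh
  exact ⟨l ++ m, rfl, List.prod_append⟩

lemma conj_prod_take_mem_prodSet (l : List G) (j : ℕ) :
    (l.take j).prod⁻¹ * l.prod * (l.take j).prod ∈ prodSet (l : Multiset G) := by
  refine ⟨l.drop j ++ l.take j, ?_, ?_⟩
  · rw [← Multiset.coe_add, add_comm, Multiset.coe_add, List.take_append_drop]
  · rw [List.prod_append, ← List.prod_take_mul_prod_drop l j]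
    group

lemma prod_take_add (l : List G) (i k : ℕ) :
    (l.take (i + k)).prod = (l.take i).prod * ((l.drop i).take k).prod := by
  rw [List.take_add, List.prod_append]

end ProdSet

section LowerBound

lemma IsProductOne.map {H : Type*} [Group H] (f : G →* H) {S : Multiset G}
    (hS : IsProductOne S) : IsProductOne (S.map f) := by
  obtain ⟨l, rfl, hl⟩ := hS
  exact ⟨l.map f, rfl, by rw [← map_list_prod, hl, map_one]⟩

lemma IsProductOne.of_one_cons {S : Multiset G} (h : IsProductOne (1 ::ₘ S)) :
    IsProductOne S := by
  obtain ⟨l, hl, hprod⟩ := h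
  obtain ⟨s, t, rfl⟩ :=
    List.append_of_mem (Multiset.mem_coe.mp (hl ▸ Multiset.mem_cons_self 1 S))
  refine ⟨s ++ t, (Multiset.cons_inj_right 1).mp ?_, by simpa using hprod⟩
  rw [← hl]
  exact Multiset.coe_eq_coe.mpr List.perm_middle.symm

lemma IsProductOne.of_add_left {U V : Multiset G} (hU : ∀ x ∈ U, x = 1)
    (h : IsProductOne (U + V)) : IsProductOne V := by
  induction U using Multiset.induction_on with
  | empty => simpa using h
  | cons x U ih =>
    obtain rfl := hU x (Multiset.mem_cons_self x U)
    exact ih (fun y hy => hU y (Multiset.mem_cons_of_mem hy))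
      (IsProductOne.of_one_cons (by simpa using h))

lemma isProductOneFree_replicate {g : G} {n : ℕ} (hn : n < orderOf g) :
    IsProductOneFree (Multiset.replicate n g) := by
  intro T hT hT0 ⟨l, hl, hprod⟩
  obtain ⟨k, hkn, rfl⟩ := Multiset.le_replicate_iff.mp hT
  have hlg : ∀ x ∈ l, x = g := fun x hx =>
    Multiset.eq_of_mem_replicate (hl ▸ Multiset.mem_coe.mpr hx)
  have hlen : l.length = k := by simpa using congrArg Multiset.card hl
  rw [List.prod_eq_pow_card l g hlg, hlen] at hprod
  have hk : k = 0 :=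
    Nat.eq_zero_of_dvd_of_lt (orderOf_dvd_of_pow_eq_one hprod) (hkn.trans_lt hn)
  exact hT0 (by simp [hk])

lemma IsProductOneFree.add_of_forall_mem {N : Subgroup G} [N.Normal]
    {S₁ S₂ : Multiset G} (hS₁N : ∀ x ∈ S₁, x ∈ N) (h₁ : IsProductOneFree S₁)
    (h₂ : IsProductOneFree (S₂.map (QuotientGroup.mk' N))) : IsProductOneFree (S₁ + S₂) := by
  classical
  intro T hT hT0 hprod
  have hT₁ : T ∩ S₁ ≤ S₁ := Multiset.inter_le_right
  have hT₂ : T - S₁ ≤ S₂ := Multiset.sub_le_iff_le_add'.mpr hT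
  have hsplit := Multiset.sub_add_inter T S₁
  by_cases hT₂0 : T - S₁ = 0
  · rw [hT₂0, zero_add] at hsplit
    exact h₁ T (hsplit ▸ hT₁) hT0 hprod
  · rw [← hsplit, add_comm] at hprod
    have himage := hprod.map (QuotientGroup.mk' N)
    rw [Multiset.map_add] at himage
    refine h₂ _ (Multiset.map_le_map hT₂) (by simpa using hT₂0) (himage.of_add_left ?_)
    simp only [Multiset.mem_map, QuotientGroup.mk'_apply, forall_exists_index, and_imp]
    rintro _ x hx rfl
    exact (QuotientGroup.eq_one_iff x).mpr (hS₁N x (Multiset.mem_of_le hT₁ hx))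

lemma exists_isProductOneFree_card_eq [Finite G] (N : Subgroup G) [N.Normal] [IsCyclic N]
    [IsCyclic (G ⧸ N)] :
    ∃ S : Multiset G, Multiset.card S = Nat.card N + N.index - 2 ∧ IsProductOneFree S := by
  obtain ⟨a, ha⟩ := IsCyclic.exists_ofOrder_eq_natCard (α := N)
  obtain ⟨c, hc⟩ := IsCyclic.exists_ofOrder_eq_natCard (α := G ⧸ N)
  obtain ⟨b, rfl⟩ := QuotientGroup.mk_surjective c
  have hN : 0 < Nat.card N := Nat.card_pos
  have hQ : 0 < N.index := Nat.pos_of_ne_zero Subgroup.index_ne_zero_of_finite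
  refine ⟨Multiset.replicate (Nat.card N - 1) (a : G) + Multiset.replicate (N.index - 1) b,
    by simp only [Multiset.card_add, Multiset.card_replicate]; omega, ?_⟩
  refine IsProductOneFree.add_of_forall_mem (N := N) (fun x hx => ?_)
    (isProductOneFree_replicate ?_) ?_
  · exact Multiset.eq_of_mem_replicate hx ▸ a.2
  · rw [Subgroup.orderOf_coe, ha]; omega
  · rw [Multiset.map_replicate]
    refine isProductOneFree_replicate ?_
    rw [QuotientGroup.mk'_apply, hc, ← Subgroup.index_eq_card]; omega

end LowerBound

section Blocks

lemma coe_drop_take_le {α : Type*} (l : List α) (i k : ℕ) :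
    ((l.drop i).take k : Multiset α) ≤ l :=
  Multiset.coe_le.mpr ((List.take_sublist _ _).trans (List.drop_sublist _ _)).subperm

def subprodSet (S : Multiset G) : Set G :=
  {g | ∃ T ≤ S, g ∈ prodSet T}

lemma one_mem_subprodSet (S : Multiset G) : (1 : G) ∈ subprodSet S :=
  ⟨0, Multiset.zero_le S, [], rfl, rfl⟩

lemma mul_mem_subprodSet_add {S T : Multiset G} {g h : G} (hg : g ∈ subprodSet S)
    (hh : h ∈ subprodSet T) : g * h ∈ subprodSet (S + T) := by
  obtain ⟨U, hUS, hgU⟩ := hg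
  obtain ⟨V, hVT, hhV⟩ := hh
  exact ⟨U + V, add_le_add hUS hVT, mul_mem_prodSet_add hgU hhV⟩

variable (N : Subgroup G)

def HasProdIn (T : Multiset G) : Prop :=
  T ≠ 0 ∧ ∃ g ∈ prodSet T, g ∈ N

variable {N}

lemma hasProdIn_drop_take {l : List G} {i k : ℕ} (hk : k ≠ 0) (hik : i + k ≤ l.length)
    (h : (l.take i).prod⁻¹ * (l.take (i + k)).prod ∈ N) :
    HasProdIn N ((l.drop i).take k : Multiset G) := by
  refine ⟨fun h0 => hk ?_, _, ⟨_, rfl, rfl⟩, by simpa [prod_take_add] using h⟩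
  have := congrArg Multiset.card h0
  simp only [Multiset.coe_card, List.length_take, List.length_drop, Multiset.card_zero] at this
  omega

lemma exists_hasProdIn_le [N.FiniteIndex] {S : Multiset G} (hS : N.index ≤ Multiset.card S) :
    ∃ T ≤ S, HasProdIn N T := by
  obtain ⟨l, rfl⟩ : ∃ l : List G, (l : Multiset G) = S := ⟨S.toList, S.coe_toList⟩
  let f : Fin (N.index + 1) → G ⧸ N := fun i => ((l.take i).prod : G ⧸ N)
  have hf : ¬ Function.Injective f := fun hf => by
    simpa [← Subgroup.index_eq_card] using Nat.card_le_card_of_injective f hf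
  obtain ⟨i, j, hij, hne⟩ : ∃ i j, f i = f j ∧ i < j := by
    simp only [Function.Injective, not_forall] at hf
    obtain ⟨i, j, hij, hne⟩ := hf
    rcases lt_or_gt_of_ne hne with h | h
    exacts [⟨i, j, hij, h⟩, ⟨j, i, hij.symm, h⟩]
  have hk : (i : ℕ) + (j - i) = j := by omega
  refine ⟨_, coe_drop_take_le l i (j - i), hasProdIn_drop_take (by omega) ?_ ?_⟩
  · have := j.2
    rw [Multiset.coe_card] at hS
    omega
  · rw [hk]; exact QuotientGroup.eq.mp hij

lemma prod_take_inv_mul_prod_take_notMem {l : List G}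
    (hl : Minimal (HasProdIn N) (l : Multiset G)) {i j : ℕ} (hij : i < j) (hj : j < l.length) :
    (l.take i).prod⁻¹ * (l.take j).prod ∉ N := by
  intro h
  have hk : i + (j - i) = j := by omega
  have hseg :=
    hasProdIn_drop_take (l := l) (i := i) (k := j - i) (by omega) (by omega) (by rwa [hk])
  have := Multiset.card_le_card (hl.2 hseg (coe_drop_take_le l i (j - i)))
  simp only [Multiset.coe_card, List.length_take, List.length_drop] at this
  omega

-- The prefix products of `l` lie in pairwise distinct cosets of `N`, and two conjugates
-- `π⁻¹ x π`, `σ⁻¹ x σ` can only agree when `σ π⁻¹` centralizes `x`, i.e. lies in `N`.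
lemma injOn_conj_prod_take_of_minimal [N.Normal]
    (hN : ∀ x ∈ N, x ≠ 1 → ∀ g : G, Commute g x → g ∈ N) {l : List G}
    (hl : Minimal (HasProdIn N) (l : Multiset G)) (hlN : l.prod ∈ N) (hl1 : l.prod ≠ 1) :
    Set.InjOn (fun j => (l.take j).prod⁻¹ * l.prod * (l.take j).prod) (Set.Iio l.length) := by
  let π (j : ℕ) : G := (l.take j).prod
  suffices ∀ i j, i < j → j < l.length → (π i)⁻¹ * l.prod * π i ≠ (π j)⁻¹ * l.prod * π j by
    intro i hi j hj hij
    by_contra hne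
    rcases lt_or_gt_of_ne hne with h | h
    exacts [this i j h hj hij, this j i h hi hij.symm]
  intro i j hij hj hconj
  have hcomm : Commute (π j * (π i)⁻¹) l.prod := calc
    π j * (π i)⁻¹ * l.prod = π j * ((π i)⁻¹ * l.prod * π i) * (π i)⁻¹ := by group
    _ = π j * ((π j)⁻¹ * l.prod * π j) * (π i)⁻¹ := by rw [hconj]
    _ = l.prod * (π j * (π i)⁻¹) := by group
  exact prod_take_inv_mul_prod_take_notMem hl hij hj
    (Subgroup.Normal.mem_comm ‹_› (hN _ hlN hl1 _ hcomm))

lemma exists_finset_card_eq_of_minimal [N.Normal]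
    (hN : ∀ x ∈ N, x ≠ 1 → ∀ g : G, Commute g x → g ∈ N) {B : Multiset G}
    (hB : Minimal (HasProdIn N) B) (hB1 : ¬ IsProductOne B) :
    ∃ A : Finset N, 1 ∉ A ∧ A.card = Multiset.card B ∧ ∀ a ∈ A, (a : G) ∈ prodSet B := by
  classical
  obtain ⟨-, _, ⟨l, rfl, rfl⟩, hlN⟩ := hB.prop
  have hl1 : l.prod ≠ 1 := fun h => hB1 ⟨l, rfl, h⟩
  let π (j : ℕ) : G := (l.take j).prod
  let v (j : ℕ) : N := ⟨(π j)⁻¹ * l.prod * π j, Subgroup.Normal.conj_mem' ‹_› _ hlN _⟩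
  have hv : Set.InjOn v (Finset.range l.length) := fun i hi j hj hij =>
    injOn_conj_prod_take_of_minimal hN hB hlN hl1 (by simpa using hi) (by simpa using hj)
      (congrArg Subtype.val hij)
  refine ⟨(Finset.range l.length).image v, ?_, ?_, ?_⟩
  · simp only [Finset.mem_image, not_exists, not_and]
    intro j _ hj
    have hj' : (π j)⁻¹ * l.prod * π j = 1 := congrArg Subtype.val hj
    exact hl1 (calc
      l.prod = π j * ((π j)⁻¹ * l.prod * π j) * (π j)⁻¹ := by group
      _ = 1 := by rw [hj']; group)
  · rw [Finset.card_image_of_injOn hv, Finset.card_range, Multiset.coe_card]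
  · simp only [Finset.mem_image, forall_exists_index, and_imp]
    rintro _ j _ rfl
    exact conj_prod_take_mem_prodSet l j

lemma exists_finset_prodSet_of_index_le_card [N.FiniteIndex] [N.Normal]
    (hN : ∀ x ∈ N, x ≠ 1 → ∀ g : G, Commute g x → g ∈ N) {S : Multiset G}
    (hS : IsProductOneFree S) (hcard : N.index ≤ Multiset.card S) :
    ∃ B ≤ S, B ≠ 0 ∧ ∃ A : Finset N, 1 ∉ A ∧ A.card = Multiset.card B ∧
      ∀ a ∈ A, (a : G) ∈ prodSet B := by
  obtain ⟨T, hTS, hT⟩ := exists_hasProdIn_le hcard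
  obtain ⟨B, hBT, hB⟩ := exists_minimal_le_of_wellFoundedLT (HasProdIn N) T hT
  exact ⟨B, hBT.trans hTS, hB.prop.1,
    exists_finset_card_eq_of_minimal hN hB (hS B (hBT.trans hTS) hB.prop.1)⟩

end Blocks

section UpperBound

variable [Finite G] {N : Subgroup G} [N.Normal]
  (hN : ∀ x ∈ N, x ≠ 1 → ∀ g : G, Commute g x → g ∈ N) (hNq : (Nat.card N).Prime)
include hN hNq

lemma exists_finset_subset_subprodSet {S : Multiset G} (hS : IsProductOneFree S) :
    ∃ X : Finset N, X.Nonempty ∧ (∀ x ∈ X, (x : G) ∈ subprodSet S) ∧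
      min (Nat.card N) (Multiset.card S + 2 - N.index) ≤ X.card := by
  classical
  induction S using Multiset.strongInductionOn with | ih S ih => ?_
  by_cases hcard : Multiset.card S < N.index
  · exact ⟨{1}, Finset.singleton_nonempty 1,
      by simpa using one_mem_subprodSet S,
      by simp only [Finset.card_singleton, inf_le_iff, tsub_le_iff_right]; omega⟩
  obtain ⟨B, hBS, hB0, A, hA1, hAB, hA⟩ :=
    exists_finset_prodSet_of_index_le_card hN hS (not_lt.mp hcard)
  have hlt : S - B < S := by
    conv_rhs => rw [← tsub_add_cancel_of_le hBS]
    exact lt_add_of_pos_right _ (pos_iff_ne_zero.mpr hB0)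
  obtain ⟨X, hX, hXS, hXcard⟩ := ih _ hlt (hS.mono (Multiset.sub_le_self S B))
  refine ⟨X * insert 1 A, hX.mul (Finset.insert_nonempty 1 A), ?_, ?_⟩
  · simp only [Finset.mem_mul, Finset.mem_insert]
    rintro _ ⟨x, hx, a, ha, rfl⟩
    rw [← tsub_add_cancel_of_le hBS]
    refine mul_mem_subprodSet_add (hXS x hx) ?_
    rcases ha with rfl | ha
    exacts [one_mem_subprodSet B, ⟨B, le_rfl, hA a ha⟩]
  · have hCD := min_le_card_mul_of_prime hNq hX (Finset.insert_nonempty 1 A)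
    rw [Finset.card_insert_of_notMem hA1] at hCD
    have := Multiset.card_mono hBS
    rw [Multiset.card_sub hBS] at hXcard
    omega

lemma card_le_of_isProductOneFree {S : Multiset G} (hS : IsProductOneFree S) :
    Multiset.card S ≤ Nat.card N + N.index - 2 := by
  classical
  by_contra! hcard
  obtain ⟨B, hBS, hB0, A, -, hAB, hA⟩ :=
    exists_finset_prodSet_of_index_le_card hN hS (by have := hNq.two_le; omega)
  obtain ⟨X, -, hXS, hXcard⟩ :=
    exists_finset_subset_subprodSet hN hNq (hS.mono (Multiset.sub_le_self S B))
  obtain ⟨a, ha, hainv⟩ : ∃ a ∈ A, a⁻¹ ∈ X := by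
    refine exists_mem_inv_mem_of_card_lt ?_
    have := Multiset.card_mono hBS
    have := Multiset.card_pos.mpr hB0
    rw [Multiset.card_sub hBS] at hXcard
    omega
  obtain ⟨T, hT, hainvT⟩ := hXS _ hainv
  refine hS (T + B) ((add_le_add hT le_rfl).trans (tsub_add_cancel_of_le hBS).le)
    (by simp [hB0]) ?_
  simpa [IsProductOne] using mul_mem_prodSet_add hainvT (hA a ha)

end UpperBound

section GroupOfOrderPQ

lemma exists_normal_card_eq_index_eq [Finite G] {p q : ℕ} (hp : p.Prime) (hq : q.Prime)
    (hpq : p < q) (hG : Nat.card G = p * q) :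
    ∃ N : Subgroup G, N.Normal ∧ Nat.card N = q ∧ N.index = p := by
  have := Fact.mk hq
  obtain ⟨g, hg⟩ := exists_prime_orderOf_dvd_card' q (hG ▸ dvd_mul_left q p)
  have hcard : Nat.card (Subgroup.zpowers g) = q := by rw [Nat.card_zpowers, hg]
  have hindex : (Subgroup.zpowers g).index = p := by
    have := (Subgroup.zpowers g).card_mul_index
    rw [hcard, hG, mul_comm p] at this
    exact Nat.eq_of_mul_eq_mul_left hq.pos this
  refine ⟨_, Subgroup.normal_of_index_eq_minFac_card ?_, hcard, hindex⟩
  have hmin := Nat.minFac_prime (Nat.one_lt_mul_iff.mpr ⟨hp.pos, hq.pos, Or.inl hp.one_lt⟩).ne'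
  have hle : (p * q).minFac ≤ p := Nat.minFac_le_of_dvd hp.two_le (dvd_mul_right p q)
  rw [hindex, hG]
  rcases (Nat.Prime.dvd_mul hmin).mp (Nat.minFac_dvd (p * q)) with h | h
  · exact ((Nat.prime_dvd_prime_iff_eq hmin hp).mp h).symm
  · exact absurd ((Nat.prime_dvd_prime_iff_eq hmin hq).mp h) (by omega)

lemma mem_of_commute_of_not_commutative (hG : ¬ ∀ a b : G, a * b = b * a) {N : Subgroup G}
    [N.Normal] (hNq : (Nat.card N).Prime) (hNp : N.index.Prime) {x : G} (hx : x ∈ N)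
    (hx1 : x ≠ 1) {g : G} (hgx : Commute g x) : g ∈ N := by
  by_contra hgN
  have := Nat.finite_of_card_ne_zero hNq.ne_zero
  have hxN : Subgroup.zpowers x = N := by
    refine Subgroup.eq_of_le_of_card_ge (Subgroup.zpowers_le.mpr hx) ?_
    rw [Nat.card_zpowers, ← Subgroup.orderOf_mk x hx]
    rcases hNq.eq_one_or_self_of_dvd _ (orderOf_dvd_natCard (⟨x, hx⟩ : N)) with h | h
    · exact absurd (by simpa using h) hx1
    · exact h.ge
  have hNK : N ≤ Subgroup.centralizer {x} := by
    rw [← hxN, Subgroup.zpowers_le, Subgroup.mem_centralizer_singleton_iff]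
  have hKtop : Subgroup.centralizer {x} = ⊤ := by
    have := Subgroup.relIndex_mul_index hNK
    rcases Nat.prime_mul_iff.mp (this ▸ hNp) with h | h
    · exact Subgroup.index_eq_one.mp h.2
    · exact absurd (Subgroup.relIndex_eq_one.mp h.2
        (Subgroup.mem_centralizer_singleton_iff.mpr hgx.eq)) hgN
  have hcenter : N ≤ Subgroup.center G := by
    rw [← hxN, Subgroup.zpowers_le, Subgroup.mem_center_iff]
    intro y
    exact Subgroup.mem_centralizer_singleton_iff.mp (by rw [hKtop]; exact Subgroup.mem_top y)
  have := Fact.mk hNp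
  have : IsCyclic (G ⧸ N) := isCyclic_of_prime_card N.index_eq_card.symm
  exact hG ((QuotientGroup.mk' N).isMulCommutative_of_isCyclic_of_ker_le_center
    (by rwa [QuotientGroup.ker_mk'])).is_comm.comm

end GroupOfOrderPQ

end

theorem stmt12 (p q : ℕ) (hp : p.Prime) (hq : q.Prime) (hpq : p ∣ q - 1)
    (G : Type*) [Group G] [Finite G] (hG : Nat.card G = p * q)
    (hna : ¬ ∀ a b : G, a * b = b * a) :
    smallDavenport G = q + p - 2 := by
  have hlt : p < q := by
    have hle : p ≤ q - 1 := Nat.le_of_dvd (Nat.sub_pos_of_lt hq.one_lt) hpq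
    have := hq.two_le
    omega
  obtain ⟨N, hN, hNq, hNp⟩ := exists_normal_card_eq_index_eq hp hq hlt hG
  have := Fact.mk hp
  have := Fact.mk hq
  have : IsCyclic N := isCyclic_of_prime_card hNq
  have : IsCyclic (G ⧸ N) := isCyclic_of_prime_card (N.index_eq_card ▸ hNp)
  subst hNq hNp
  exact smallDavenport_eq
    (fun S hS => card_le_of_isProductOneFree
      (fun x hx hx1 g hgx => mem_of_commute_of_not_commutative hna hq hp hx hx1 hgx) hq hS)
    (exists_isProductOneFree_card_eq N)
end
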